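/- Let a,d ∈ ℕ² be ℚ-linearly independent with S_{a,d,3} = ⟨a, a+d, a+2d, a+3d⟩ minimally generated. The multigraded Hilbert series of k[S_{a,d,3}] is H(t) = (1 − Σ_{i=2}^{4} t^{2a+id} + Σ_{i=4}^{5} t^{3a+id}) / ∏_{i=0}^{3}(1 − t^{a+id}). -/

import Mathlib

variable (𝕜 : Type) [Field 𝕜]

/-- The affine semigroup `S_{a,d,k} = ⟨a, a+d, …, a+kd⟩ ⊆ ℕ²`. -/
def Sadk (a d : ℕ × ℕ) (k : ℕ) : AddSubmonoid (ℕ × ℕ) :=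
  AddSubmonoid.closure {x : ℕ × ℕ | ∃ i : ℕ, i ≤ k ∧ x = a + i • d}

/-- `a` and `d` are linearly independent over `ℚ`. -/
def qLinIndep (a d : ℕ × ℕ) : Prop :=
  LinearIndependent ℚ ![((a.1 : ℚ), (a.2 : ℚ)), ((d.1 : ℚ), (d.2 : ℚ))]

/-- The generating set `a, a+d, …, a+kd` of `S_{a,d,k}` is minimal. -/
def minGen (a d : ℕ × ℕ) (k : ℕ) : Prop :=
  ∀ i : ℕ, i ≤ k →
    a + i • d ∉ AddSubmonoid.closure {x : ℕ × ℕ | ∃ j : ℕ, j ≤ k ∧ j ≠ i ∧ x = a + j • d}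

/-- The monomial `t^s = t₁^{s₁} t₂^{s₂}` as a power series in two variables. -/
noncomputable def Tm (s : ℕ × ℕ) : MvPowerSeries (Fin 2) 𝕜 :=
  MvPowerSeries.monomial (Finsupp.single 0 s.1 + Finsupp.single 1 s.2) 1

open scoped Classical in
/-- The multigraded Hilbert series `H(𝕜[S], t) = Σ_{s ∈ S} t^s` of the semigroup algebra of
`S ⊆ ℕ²`, as a formal power series in `t₁, t₂`. -/
noncomputable def hilbertSeries (S : AddSubmonoid (ℕ × ℕ)) : MvPowerSeries (Fin 2) 𝕜 :=
  fun e => if (e 0, e 1) ∈ S then 1 else 0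

/-! ### Auxiliary machinery -/

open scoped Classical

namespace HilbAux

/-- The exponent of `ℕ²` as a finitely supported function on `Fin 2`. -/
noncomputable def D (s : ℕ × ℕ) : Fin 2 →₀ ℕ :=
  Finsupp.single 0 s.1 + Finsupp.single 1 s.2

@[simp] lemma D_apply0 (s : ℕ × ℕ) : D s 0 = s.1 := by simp [D]
@[simp] lemma D_apply1 (s : ℕ × ℕ) : D s 1 = s.2 := by simp [D]

lemma D_add (s t : ℕ × ℕ) : D (s + t) = D s + D t := by
  ext i; fin_cases i <;> simp

lemma eq_D (e : Fin 2 →₀ ℕ) : e = D (e 0, e 1) := by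
  ext i; fin_cases i <;> simp

lemma D_inj {s t : ℕ × ℕ} (h : D s = D t) : s = t := by
  have h0 := DFunLike.congr_fun h 0
  have h1 := DFunLike.congr_fun h 1
  simp at h0 h1
  exact Prod.ext h0 h1

lemma prodeq {x y : ℕ × ℕ} (h1 : x.1 = y.1) (h2 : x.2 = y.2) : x = y := Prod.ext h1 h2

lemma Tm_eq (s : ℕ × ℕ) : Tm 𝕜 s = MvPowerSeries.monomial (D s) 1 := rfl

lemma Tm_mul (s t : ℕ × ℕ) : Tm 𝕜 s * Tm 𝕜 t = Tm 𝕜 (s + t) := by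
  rw [Tm_eq, Tm_eq, Tm_eq, MvPowerSeries.monomial_mul_monomial, one_mul, D_add]

lemma coeff_mul_Tm (f : MvPowerSeries (Fin 2) 𝕜) (s : ℕ × ℕ) (e : Fin 2 →₀ ℕ) :
    MvPowerSeries.coeff e (f * Tm 𝕜 s) =
      if D s ≤ e then MvPowerSeries.coeff (e - D s) f else 0 := by
  rw [Tm_eq, MvPowerSeries.coeff_mul_monomial]
  split <;> simp

lemma exists_of_le {s : ℕ × ℕ} {e : Fin 2 →₀ ℕ} (h : D s ≤ e) :
    ∃ E' : ℕ × ℕ, (e 0, e 1) = E' + s ∧ e - D s = D E' := by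
  refine ⟨((e - D s) 0, (e - D s) 1), ?_, eq_D _⟩
  have h2 : e = (e - D s) + D s := (tsub_add_cancel_of_le h).symm
  have h3 : e = D (((e - D s) 0, (e - D s) 1) + s) := by
    rw [D_add, ← eq_D]; exact h2
  exact D_inj ((eq_D e).symm.trans h3)

lemma le_and_sub_of_eq {s E' : ℕ × ℕ} {e : Fin 2 →₀ ℕ} (h : (e 0, e 1) = E' + s) :
    D s ≤ e ∧ e - D s = D E' := by
  have he : e = D E' + D s := by rw [eq_D e, h, D_add]
  constructor
  · rw [he]; exact le_add_self
  · rw [he, add_tsub_cancel_right]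

variable (a d : ℕ × ℕ)

/-- Auxiliary series: indicator of `⟨a, a+3d⟩`. -/
noncomputable def G : MvPowerSeries (Fin 2) 𝕜 :=
  fun e => if ∃ k l : ℕ, (e 0, e 1) = (k + l) • a + (3 * l) • d then 1 else 0

/-- Auxiliary series: indicator of `⟨a+3d⟩`. -/
noncomputable def G3 : MvPowerSeries (Fin 2) 𝕜 :=
  fun e => if ∃ l : ℕ, (e 0, e 1) = l • a + (3 * l) • d then 1 else 0

lemma coeff_G (e : Fin 2 →₀ ℕ) :
    MvPowerSeries.coeff e (G 𝕜 a d) =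
      if ∃ k l : ℕ, (e 0, e 1) = (k + l) • a + (3 * l) • d then 1 else 0 := rfl

lemma coeff_G3 (e : Fin 2 →₀ ℕ) :
    MvPowerSeries.coeff e (G3 𝕜 a d) =
      if ∃ l : ℕ, (e 0, e 1) = l • a + (3 * l) • d then 1 else 0 := rfl

lemma coeff_H (S : AddSubmonoid (ℕ × ℕ)) (e : Fin 2 →₀ ℕ) :
    MvPowerSeries.coeff e (hilbertSeries 𝕜 S) =
      if (e 0, e 1) ∈ S then 1 else 0 := rfl

lemma coeff_G_shift (s : ℕ × ℕ) (e : Fin 2 →₀ ℕ) :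
    (if D s ≤ e then MvPowerSeries.coeff (e - D s) (G 𝕜 a d) else 0) =
      if ∃ k l : ℕ, (e 0, e 1) = ((k + l) • a + (3 * l) • d) + s then 1 else 0 := by
  by_cases h : D s ≤ e
  · obtain ⟨E', hE, hsub⟩ := exists_of_le h
    rw [if_pos h, hsub, coeff_G]
    have hDE : (D E' 0, D E' 1) = E' := by simp
    rw [hDE]
    refine if_congr ?_ rfl rfl
    constructor
    · rintro ⟨k, l, hkl⟩; exact ⟨k, l, by rw [hE, hkl]⟩
    · rintro ⟨k, l, hkl⟩
      exact ⟨k, l, add_right_cancel (hE.symm.trans hkl)⟩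
  · have hP : ¬ ∃ k l : ℕ, (e 0, e 1) = ((k + l) • a + (3 * l) • d) + s := by
      rintro ⟨k, l, hkl⟩; exact h (le_and_sub_of_eq hkl).1
    rw [if_neg h, if_neg hP]

lemma coeff_G3_shift (s : ℕ × ℕ) (e : Fin 2 →₀ ℕ) :
    (if D s ≤ e then MvPowerSeries.coeff (e - D s) (G3 𝕜 a d) else 0) =
      if ∃ l : ℕ, (e 0, e 1) = (l • a + (3 * l) • d) + s then 1 else 0 := by
  by_cases h : D s ≤ e
  · obtain ⟨E', hE, hsub⟩ := exists_of_le h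
    rw [if_pos h, hsub, coeff_G3]
    have hDE : (D E' 0, D E' 1) = E' := by simp
    rw [hDE]
    refine if_congr ?_ rfl rfl
    constructor
    · rintro ⟨l, hkl⟩; exact ⟨l, by rw [hE, hkl]⟩
    · rintro ⟨l, hkl⟩
      exact ⟨l, add_right_cancel (hE.symm.trans hkl)⟩
  · have hP : ¬ ∃ l : ℕ, (e 0, e 1) = (l • a + (3 * l) • d) + s := by
      rintro ⟨l, hkl⟩; exact h (le_and_sub_of_eq hkl).1
    rw [if_neg h, if_neg hP]

lemma addform0 (m n : ℕ) : (m • a + n • d) + a = (m + 1) • a + n • d := by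
  apply prodeq <;> simp [Prod.smul_fst, Prod.smul_snd, smul_eq_mul] <;> ring

lemma addform1 (m n : ℕ) : (m • a + n • d) + (a + d) = (m + 1) • a + (n + 1) • d := by
  apply prodeq <;> simp [Prod.smul_fst, Prod.smul_snd, smul_eq_mul] <;> ring

lemma addform2 (m n : ℕ) : (m • a + n • d) + (a + 2 • d) = (m + 1) • a + (n + 2) • d := by
  apply prodeq <;> simp [Prod.smul_fst, Prod.smul_snd, smul_eq_mul] <;> ring

lemma addform3 (m n : ℕ) : (m • a + n • d) + (a + 3 • d) = (m + 1) • a + (n + 3) • d := by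
  apply prodeq <;> simp [Prod.smul_fst, Prod.smul_snd, smul_eq_mul] <;> ring

lemma psi_inj {m n m' n' : ℕ} (hli : qLinIndep a d)
    (h : m • a + n • d = m' • a + n' • d) : m = m' ∧ n = n' := by
  rw [qLinIndep, LinearIndependent.pair_iff] at hli
  have h1 := congrArg Prod.fst h
  have h2 := congrArg Prod.snd h
  simp [Prod.smul_fst, Prod.smul_snd, smul_eq_mul] at h1 h2
  have key := hli ((m : ℚ) - m') ((n : ℚ) - n') ?_
  · have k1 : (m : ℚ) = m' := by have := key.1; linarith
    have k2 : (n : ℚ) = n' := by have := key.2; linarith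
    exact ⟨by exact_mod_cast k1, by exact_mod_cast k2⟩
  · have hq1 : (m : ℚ) * a.1 + n * d.1 = m' * a.1 + n' * d.1 := by exact_mod_cast h1
    have hq2 : (m : ℚ) * a.2 + n * d.2 = m' * a.2 + n' * d.2 := by exact_mod_cast h2
    apply Prod.ext <;> simp [Prod.smul_fst, Prod.smul_snd, smul_eq_mul] <;> linarith

lemma a_ne_zero (hli : qLinIndep a d) : a ≠ 0 := by
  intro h
  have h0 := hli.ne_zero 0
  simp [h] at h0

lemma mem_Sadk {p : ℕ × ℕ} :
    p ∈ Sadk a d 3 ↔ ∃ m n : ℕ, n ≤ 3 * m ∧ p = m • a + n • d := by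
  constructor
  · intro hp
    induction hp using AddSubmonoid.closure_induction with
    | mem x hx =>
      obtain ⟨i, hi, rfl⟩ := hx
      exact ⟨1, i, by omega, by simp⟩
    | zero => exact ⟨0, 0, le_refl 0, by simp⟩
    | add x y hx hy ihx ihy =>
      obtain ⟨m, n, hn, rfl⟩ := ihx
      obtain ⟨m', n', hn', rfl⟩ := ihy
      refine ⟨m + m', n + n', by omega, ?_⟩
      apply prodeq <;> simp [Prod.smul_fst, Prod.smul_snd, smul_eq_mul] <;> ring
  · rintro ⟨m, n, hn, rfl⟩
    induction m generalizing n with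
    | zero =>
      have : n = 0 := by omega
      subst this; simp
    | succ m ih =>
      rcases Nat.le_total n 3 with h | h
      · have hkey : (m + 1) • a + n • d = (a + n • d) + (m • a + 0 • d) := by
          rw [succ_nsmul, zero_smul, add_zero]; abel
        rw [hkey]
        exact (Sadk a d 3).add_mem
          (AddSubmonoid.subset_closure ⟨n, h, rfl⟩) (ih 0 (by omega))
      · obtain ⟨n', rfl⟩ : ∃ n', n = 3 + n' := ⟨n - 3, by omega⟩
        have hkey : (m + 1) • a + (3 + n') • d = (a + 3 • d) + (m • a + n' • d) := by
          rw [succ_nsmul, add_smul]; abel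
        rw [hkey]
        exact (Sadk a d 3).add_mem
          (AddSubmonoid.subset_closure ⟨3, le_refl 3, rfl⟩) (ih n' (by omega))

lemma keyH (hli : qLinIndep a d) :
    hilbertSeries 𝕜 (Sadk a d 3) =
      G 𝕜 a d * (1 + Tm 𝕜 (a + d) + Tm 𝕜 (a + 2 • d)) := by
  apply MvPowerSeries.ext; intro e
  rw [mul_add, mul_add, mul_one, map_add, map_add, coeff_mul_Tm, coeff_mul_Tm,
    coeff_G_shift, coeff_G_shift, coeff_G, coeff_H]
  simp only [addform1, addform2]
  by_cases hS : (e 0, e 1) ∈ Sadk a d 3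
  · obtain ⟨m, n, hn, hE⟩ := (mem_Sadk a d).mp hS
    have uniq : ∀ m' n' : ℕ, (e 0, e 1) = m' • a + n' • d → m = m' ∧ n = n' :=
      fun m' n' h' => psi_inj a d hli (hE.symm.trans h')
    rw [if_pos hS]
    have h3 : n % 3 = 0 ∨ n % 3 = 1 ∨ n % 3 = 2 := by omega
    rcases h3 with h3 | h3 | h3
    · have hp0 : ∃ k l : ℕ, (e 0, e 1) = (k + l) • a + (3 * l) • d := by
        refine ⟨m - n / 3, n / 3, ?_⟩
        have e1 : m - n / 3 + n / 3 = m := by omega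
        have e2 : 3 * (n / 3) = n := by omega
        rw [e1, e2]; exact hE
      have hp1 : ¬ ∃ k l : ℕ, (e 0, e 1) = (k + l + 1) • a + (3 * l + 1) • d := by
        rintro ⟨k, l, h⟩; have := uniq _ _ h; omega
      have hp2 : ¬ ∃ k l : ℕ, (e 0, e 1) = (k + l + 1) • a + (3 * l + 2) • d := by
        rintro ⟨k, l, h⟩; have := uniq _ _ h; omega
      rw [if_pos hp0, if_neg hp1, if_neg hp2]; norm_num
    · have hp0 : ¬ ∃ k l : ℕ, (e 0, e 1) = (k + l) • a + (3 * l) • d := by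
        rintro ⟨k, l, h⟩; have := uniq _ _ h; omega
      have hp1 : ∃ k l : ℕ, (e 0, e 1) = (k + l + 1) • a + (3 * l + 1) • d := by
        refine ⟨m - n / 3 - 1, n / 3, ?_⟩
        have e1 : m - n / 3 - 1 + n / 3 + 1 = m := by omega
        have e2 : 3 * (n / 3) + 1 = n := by omega
        rw [e1, e2]; exact hE
      have hp2 : ¬ ∃ k l : ℕ, (e 0, e 1) = (k + l + 1) • a + (3 * l + 2) • d := by
        rintro ⟨k, l, h⟩; have := uniq _ _ h; omega
      rw [if_neg hp0, if_pos hp1, if_neg hp2]; norm_num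
    · have hp0 : ¬ ∃ k l : ℕ, (e 0, e 1) = (k + l) • a + (3 * l) • d := by
        rintro ⟨k, l, h⟩; have := uniq _ _ h; omega
      have hp1 : ¬ ∃ k l : ℕ, (e 0, e 1) = (k + l + 1) • a + (3 * l + 1) • d := by
        rintro ⟨k, l, h⟩; have := uniq _ _ h; omega
      have hp2 : ∃ k l : ℕ, (e 0, e 1) = (k + l + 1) • a + (3 * l + 2) • d := by
        refine ⟨m - n / 3 - 1, n / 3, ?_⟩
        have e1 : m - n / 3 - 1 + n / 3 + 1 = m := by omega
        have e2 : 3 * (n / 3) + 2 = n := by omega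
        rw [e1, e2]; exact hE
      rw [if_neg hp0, if_neg hp1, if_pos hp2]; norm_num
  · have hp0 : ¬ ∃ k l : ℕ, (e 0, e 1) = (k + l) • a + (3 * l) • d := by
      rintro ⟨k, l, h⟩
      exact hS ((mem_Sadk a d).mpr ⟨k + l, 3 * l, by omega, h⟩)
    have hp1 : ¬ ∃ k l : ℕ, (e 0, e 1) = (k + l + 1) • a + (3 * l + 1) • d := by
      rintro ⟨k, l, h⟩
      exact hS ((mem_Sadk a d).mpr ⟨k + l + 1, 3 * l + 1, by omega, h⟩)
    have hp2 : ¬ ∃ k l : ℕ, (e 0, e 1) = (k + l + 1) • a + (3 * l + 2) • d := by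
      rintro ⟨k, l, h⟩
      exact hS ((mem_Sadk a d).mpr ⟨k + l + 1, 3 * l + 2, by omega, h⟩)
    rw [if_neg hS, if_neg hp0, if_neg hp1, if_neg hp2]; norm_num

lemma keyG (hli : qLinIndep a d) :
    G 𝕜 a d * (1 - Tm 𝕜 a) = G3 𝕜 a d := by
  apply MvPowerSeries.ext; intro e
  rw [mul_sub, mul_one, map_sub, coeff_mul_Tm, coeff_G_shift, coeff_G, coeff_G3]
  simp only [addform0]
  by_cases h0 : ∃ k l : ℕ, (e 0, e 1) = (k + l) • a + (3 * l) • d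
  · obtain ⟨k, l, hkl⟩ := h0
    rcases k with _ | k
    · have hq : ∃ l' : ℕ, (e 0, e 1) = l' • a + (3 * l') • d := ⟨l, by simpa using hkl⟩
      have hn : ¬ ∃ k' l' : ℕ, (e 0, e 1) = (k' + l' + 1) • a + (3 * l') • d := by
        rintro ⟨k', l', h⟩
        have := psi_inj a d hli (hkl.symm.trans h); omega
      rw [if_pos ⟨0, l, hkl⟩, if_neg hn, if_pos hq]; norm_num
    · have hp : ∃ k' l' : ℕ, (e 0, e 1) = (k' + l' + 1) • a + (3 * l') • d := by
        refine ⟨k, l, ?_⟩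
        have e1 : k + l + 1 = k + 1 + l := by omega
        rw [e1]; exact hkl
      have hn3 : ¬ ∃ l' : ℕ, (e 0, e 1) = l' • a + (3 * l') • d := by
        rintro ⟨l', h⟩
        have := psi_inj a d hli (hkl.symm.trans h); omega
      rw [if_pos ⟨k + 1, l, hkl⟩, if_pos hp, if_neg hn3]; norm_num
  · have hn1 : ¬ ∃ k l : ℕ, (e 0, e 1) = (k + l + 1) • a + (3 * l) • d := by
      rintro ⟨k, l, h⟩
      refine h0 ⟨k + 1, l, ?_⟩
      have e1 : k + 1 + l = k + l + 1 := by omega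
      rw [e1]; exact h
    have hn2 : ¬ ∃ l : ℕ, (e 0, e 1) = l • a + (3 * l) • d := by
      rintro ⟨l, h⟩
      exact h0 ⟨0, l, by simpa using h⟩
    rw [if_neg h0, if_neg hn1, if_neg hn2]; norm_num

lemma keyG3 (hli : qLinIndep a d) :
    G3 𝕜 a d * (1 - Tm 𝕜 (a + 3 • d)) = 1 := by
  apply MvPowerSeries.ext; intro e
  rw [mul_sub, mul_one, map_sub, coeff_mul_Tm, coeff_G3_shift, coeff_G3,
    MvPowerSeries.coeff_one]
  simp only [addform3]
  by_cases h0 : ∃ l : ℕ, (e 0, e 1) = l • a + (3 * l) • d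
  · obtain ⟨l, hl⟩ := h0
    rcases l with _ | l
    · have hE0 : (e 0, e 1) = (0, 0) := by simpa using hl
      have he0 : e = 0 := by
        have h1 : e 0 = 0 := congrArg Prod.fst hE0
        have h2 : e 1 = 0 := congrArg Prod.snd hE0
        ext i; fin_cases i
        · simpa using h1
        · simpa using h2
      have hnone : ¬ ∃ l' : ℕ, (e 0, e 1) = (l' + 1) • a + (3 * l' + 3) • d := by
        rintro ⟨l', h⟩
        have := psi_inj a d hli (hl.symm.trans h); omega
      rw [if_pos ⟨0, hl⟩, if_neg hnone, if_pos he0]; norm_num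
    · have hshift : ∃ l' : ℕ, (e 0, e 1) = (l' + 1) • a + (3 * l' + 3) • d := by
        refine ⟨l, ?_⟩
        have e2 : 3 * l + 3 = 3 * (l + 1) := by omega
        rw [e2]; exact hl
      have hne : ¬ e = 0 := by
        intro h
        have hE0 : (e 0, e 1) = ((0 : ℕ), (0 : ℕ)) := by simp [h]
        have hzz : ((0 : ℕ), (0 : ℕ)) = (0 : ℕ × ℕ) := rfl
        have h00 : (e 0, e 1) = (0 : ℕ) • a + (0 : ℕ) • d := by
          rw [hE0, hzz]; simp
        have := psi_inj a d hli (h00.symm.trans hl); omega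
      rw [if_pos ⟨l + 1, hl⟩, if_pos hshift, if_neg hne]; norm_num
  · have hn1 : ¬ ∃ l' : ℕ, (e 0, e 1) = (l' + 1) • a + (3 * l' + 3) • d := by
      rintro ⟨l', h⟩
      refine h0 ⟨l' + 1, ?_⟩
      have e2 : 3 * (l' + 1) = 3 * l' + 3 := by omega
      rw [e2]; exact h
    have hne : ¬ e = 0 := by
      intro h
      refine h0 ⟨0, ?_⟩
      have hE0 : (e 0, e 1) = ((0 : ℕ), (0 : ℕ)) := by simp [h]
      rw [hE0]; simp
    rw [if_neg h0, if_neg hn1, if_neg hne]; norm_num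

end HilbAux

open HilbAux in
/-- The Hilbert series of `𝕜[S_{a,d,3}]` is
`(1 − Σ_{i=2}^{4} t^{2a+id} + Σ_{i=4}^{5} t^{3a+id}) / ∏_{i=0}^{3}(1 − t^{a+id})`,
stated multiplicatively (with denominator cleared). -/
theorem hilbertSeries_Sad3 (a d : ℕ × ℕ) (hli : qLinIndep a d) (hmin : minGen a d 3) :
    hilbertSeries 𝕜 (Sadk a d 3) * ∏ i ∈ Finset.range 4, (1 - Tm 𝕜 (a + i • d)) =
      1 - (Tm 𝕜 (2 • a + 2 • d) + Tm 𝕜 (2 • a + 3 • d) + Tm 𝕜 (2 • a + 4 • d)) +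
        (Tm 𝕜 (3 • a + 4 • d) + Tm 𝕜 (3 • a + 5 • d)) := by
  set x := Tm 𝕜 (a + d) with hx
  set y := Tm 𝕜 (a + 2 • d) with hy
  have hprod : ∏ i ∈ Finset.range 4, (1 - Tm 𝕜 (a + i • d)) =
      (1 - Tm 𝕜 a) * (1 - x) * (1 - y) * (1 - Tm 𝕜 (a + 3 • d)) := by
    rw [Finset.prod_range_succ, Finset.prod_range_succ, Finset.prod_range_succ,
      Finset.prod_range_one]
    simp only [zero_smul, add_zero, one_smul]
    rfl
  rw [hprod, keyH 𝕜 a d hli]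
  have hassoc : G 𝕜 a d * (1 + x + y) *
      ((1 - Tm 𝕜 a) * (1 - x) * (1 - y) * (1 - Tm 𝕜 (a + 3 • d))) =
      G 𝕜 a d * (1 - Tm 𝕜 a) * (1 - Tm 𝕜 (a + 3 • d)) * ((1 + x + y) * (1 - x) * (1 - y)) := by
    ring
  rw [hassoc, keyG 𝕜 a d hli, keyG3 𝕜 a d hli, one_mul]
  have expand : (1 + x + y) * (1 - x) * (1 - y) =
      1 - (x * x + x * y + y * y) + (x * x * y + x * y * y) := by ring
  have pa : (a + d) + (a + d) = 2 • a + 2 • d := by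
    apply prodeq <;> simp [Prod.smul_fst, Prod.smul_snd, smul_eq_mul] <;> ring
  have pb : (a + d) + (a + 2 • d) = 2 • a + 3 • d := by
    apply prodeq <;> simp [Prod.smul_fst, Prod.smul_snd, smul_eq_mul] <;> ring
  have pc : (a + 2 • d) + (a + 2 • d) = 2 • a + 4 • d := by
    apply prodeq <;> simp [Prod.smul_fst, Prod.smul_snd, smul_eq_mul] <;> ring
  have pd : (2 • a + 2 • d) + (a + 2 • d) = 3 • a + 4 • d := by
    apply prodeq <;> simp [Prod.smul_fst, Prod.smul_snd, smul_eq_mul] <;> ring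
  have pe : (2 • a + 3 • d) + (a + 2 • d) = 3 • a + 5 • d := by
    apply prodeq <;> simp [Prod.smul_fst, Prod.smul_snd, smul_eq_mul] <;> ring
  have hxx : x * x = Tm 𝕜 (2 • a + 2 • d) := by rw [hx, Tm_mul, pa]
  have hxy : x * y = Tm 𝕜 (2 • a + 3 • d) := by rw [hx, hy, Tm_mul, pb]
  have hyy : y * y = Tm 𝕜 (2 • a + 4 • d) := by rw [hy, Tm_mul, pc]
  have hxxy : x * x * y = Tm 𝕜 (3 • a + 4 • d) := by rw [hxx, hy, Tm_mul, pd]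
  have hxyy : x * y * y = Tm 𝕜 (3 • a + 5 • d) := by rw [hxy, hy, Tm_mul, pe]
  rw [expand, hxxy, hxyy, hxx, hxy, hyy]
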